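/- (Conjecture 1 of the paper.) Fix an integer r ≥ 1 and let x, y, s be the sequences produced by the signum algorithm for radius r, and let a_n = x_n + y_n be the Manhattan distance of the n-th path point to the origin. Then the arithmetic mean A(π_n) = (1/(2r)) Σ_{n=0}^{2r−1} 4r/a_n = 2 Σ_{n=0}^{2r−1} 1/a_n of the π-values π_n(r) = 4r/a_n converges to π as r → ∞, the limit being taken over positive integers r tending to infinity. -/

import Mathlib

/-- The cost function `Δ` of the signum algorithm at the point `(x, y)` for radius `r`:
`Δ = |r - √((x-1)² + y²)| - |r - √(x² + (y+1)²)|`. -/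
noncomputable def sigDelta (r : ℕ) (x y : ℤ) : ℝ :=
  |(r : ℝ) - Real.sqrt (((x : ℝ) - 1) ^ 2 + (y : ℝ) ^ 2)| -
    |(r : ℝ) - Real.sqrt ((x : ℝ) ^ 2 + ((y : ℝ) + 1) ^ 2)|

/-- The step sign of the signum algorithm: `s = -1` if `Δ ≤ 0`, and `s = 1` if `Δ > 0`. -/
noncomputable def sigStep (r : ℕ) (x y : ℤ) : ℤ :=
  if sigDelta r x y ≤ 0 then -1 else 1

/-- The points `(x_n, y_n)` of the digital quarter circle of radius `r` produced by the
signum algorithm: `(x₀, y₀) = (r, 0)`, and `(x_{n+1}, y_{n+1}) = (x_n - 1, y_n)` if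
`s_n = -1`, `(x_{n+1}, y_{n+1}) = (x_n, y_n + 1)` if `s_n = 1`. -/
noncomputable def sigPt (r : ℕ) : ℕ → ℤ × ℤ
  | 0 => ((r : ℤ), 0)
  | n + 1 =>
    if sigStep r (sigPt r n).1 (sigPt r n).2 = -1
    then ((sigPt r n).1 - 1, (sigPt r n).2)
    else ((sigPt r n).1, (sigPt r n).2 + 1)

/-- The step sequence `s_n` of the signum algorithm for radius `r`. -/
noncomputable def sigS (r : ℕ) (n : ℕ) : ℤ :=
  sigStep r (sigPt r n).1 (sigPt r n).2

/-- The recursively constructed area under the digital quarter circle: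
`𝒜₀ = 0`, `𝒜_{n+1} = 𝒜_n + x_n` if `s_n = 1`, and `𝒜_{n+1} = 𝒜_n` if `s_n = -1`. -/
noncomputable def sigArea (r : ℕ) : ℕ → ℤ
  | 0 => 0
  | n + 1 =>
    if sigS r n = 1 then sigArea r n + (sigPt r n).1 else sigArea r n

open Filter

/-!
Each step moves to whichever of the two candidate neighbours has its Euclidean distance to the
origin closer to `r`, and one of the two always lies in the annulus
`(r - 1)² ≤ x² + y² ≤ (r + 1)²`; so the path never leaves it before step `2r`. Since
`y_n - x_n = n - r` and `(x + y)² = 2(x² + y²) - (y - x)²`, this pins `a_n` down to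
`√(2r² - (n - r)²) + O(1)`, so `Σ_{n<2r} 1/a_n` is within `O(1/r)` of the Riemann sum of
`t ↦ 1/√(2r² - (t - r)²)` over `[0, 2r]`, whose integral is `π/2`.
-/

open Real

theorem AntitoneOn.sum_Ico_le_integral_add {f : ℝ → ℝ} {a b : ℕ} (hab : a ≤ b)
    (hf : AntitoneOn f (Set.Icc a b)) :
    ∑ i ∈ Finset.Ico a b, f i ≤ (∫ x in a..b, f x) + (f a - f b) := by
  have hshift := hf.sum_le_integral_Ico hab
  have htele := Finset.sum_Ico_sub (fun i : ℕ => f i) hab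
  rw [Finset.sum_sub_distrib] at htele
  push_cast at hshift htele
  linarith

theorem MonotoneOn.integral_le_sum_Ico_add {f : ℝ → ℝ} {a b : ℕ} (hab : a ≤ b)
    (hf : MonotoneOn f (Set.Icc a b)) :
    ∫ x in a..b, f x ≤ ∑ i ∈ Finset.Ico a b, f i + (f b - f a) := by
  have hshift := hf.integral_le_sum_Ico hab
  have htele := Finset.sum_Ico_sub (fun i : ℕ => f i) hab
  rw [Finset.sum_sub_distrib] at htele
  push_cast at hshift htele
  linarith

theorem hasDerivAt_arcsin_div {c u : ℝ} (hu : |u| < c) :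
    HasDerivAt (fun v => Real.arcsin (v / c)) (1 / √(c ^ 2 - u ^ 2)) u := by
  have hc : 0 < c := (abs_nonneg u).trans_lt hu
  have hlt : |u / c| < 1 := by rwa [abs_div, abs_of_pos hc, div_lt_one hc]
  have hderiv := (Real.hasDerivAt_arcsin (abs_lt.1 hlt).1.ne' (abs_lt.1 hlt).2.ne).comp u
    ((hasDerivAt_id u).div_const c)
  refine hderiv.congr_deriv ?_
  rw [show c ^ 2 - u ^ 2 = c ^ 2 * (1 - (u / c) ^ 2) by field_simp, Real.sqrt_mul (sq_nonneg c),
    Real.sqrt_sq hc.le]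
  simp [field]

theorem integral_one_div_sqrt_sq_sub_sq {a b c : ℝ} (ha : |a| < c) (hb : |b| < c) :
    ∫ u in a..b, 1 / √(c ^ 2 - u ^ 2) = Real.arcsin (b / c) - Real.arcsin (a / c) := by
  have hmem : ∀ u ∈ Set.uIcc a b, |u| < c := by
    intro u hu
    rcases Set.mem_uIcc.1 hu with h | h
    · exact (abs_le_max_abs_abs h.1 h.2).trans_lt (max_lt ha hb)
    · exact (abs_le_max_abs_abs h.1 h.2).trans_lt (max_lt hb ha)
  refine intervalIntegral.integral_eq_sub_of_hasDerivAt
    (fun u hu => hasDerivAt_arcsin_div (hmem u hu)) ?_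
  refine ContinuousOn.intervalIntegrable fun u hu => ?_
  have hpos : 0 < c ^ 2 - u ^ 2 := by
    have := hmem u hu
    nlinarith [abs_nonneg u, sq_abs u]
  exact (continuousAt_const.div (continuousAt_const.sub (continuousAt_id.pow 2)).sqrt
    (Real.sqrt_pos.2 hpos).ne').continuousWithinAt

theorem abs_sub_sqrt_le_one_iff {R K : ℝ} (hR : 1 ≤ R) (hK : 0 ≤ K) :
    |R - √K| ≤ 1 ↔ (R - 1) ^ 2 ≤ K ∧ K ≤ (R + 1) ^ 2 := by
  rw [abs_le, ← Real.sqrt_le_sqrt_iff hK, ← Real.sqrt_le_sqrt_iff (sq_nonneg _),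
    Real.sqrt_sq (by linarith), Real.sqrt_sq (by linarith)]
  constructor <;> rintro ⟨h₁, h₂⟩ <;> constructor <;> linarith

theorem abs_one_div_sub_one_div_sqrt_le {a w r c : ℝ} (hr : 0 < r) (ha : r ≤ 2 * a)
    (hw : r ^ 2 ≤ w) (h : |a ^ 2 - w| ≤ c * r) :
    |1 / a - 1 / √w| ≤ 2 * c / r ^ 2 := by
  have ha₀ : 0 < a := by linarith
  have hs : r ≤ √w := Real.le_sqrt_of_sq_le hw
  have hs₀ : 0 < √w := hr.trans_le hs
  have hdiff : |√w - a| ≤ c := by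
    have hprod : |√w - a| * (√w + a) = |a ^ 2 - w| := by
      rw [← abs_of_pos (by linarith : 0 < √w + a), ← abs_mul, abs_sub_comm (a ^ 2)]
      congr 1
      linear_combination Real.sq_sqrt ((sq_nonneg r).trans hw)
    nlinarith [abs_nonneg (√w - a)]
  have hr2 : r ^ 2 ≤ 2 * a * √w := by nlinarith
  rw [div_sub_div _ _ ha₀.ne' hs₀.ne', one_mul, mul_one, abs_div,
    abs_of_pos (mul_pos ha₀ hs₀), div_le_div_iff₀ (mul_pos ha₀ hs₀) (by positivity)]
  nlinarith [mul_le_mul hdiff hr2 (sq_nonneg r) ((abs_nonneg _).trans hdiff)]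

/-- `x + y` at the point of the circle `x² + y² = r²` on the line `y - x = t - r`. -/
noncomputable def circleManhattan (r t : ℝ) : ℝ := √(2 * r ^ 2 - (t - r) ^ 2)

theorem le_circleManhattan {r t : ℝ} (hr : 0 ≤ r) (ht₀ : 0 ≤ t) (ht : t ≤ 2 * r) :
    r ≤ circleManhattan r t :=
  (Real.le_sqrt hr (by nlinarith)).2 (by nlinarith)

theorem one_div_circleManhattan_le {r t : ℝ} (hr : 0 < r) (ht₀ : 0 ≤ t) (ht : t ≤ 2 * r) :
    1 / circleManhattan r t ≤ 1 / r :=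
  one_div_le_one_div_of_le hr (le_circleManhattan hr.le ht₀ ht)

theorem antitoneOn_one_div_circleManhattan {r : ℝ} (hr : 0 < r) :
    AntitoneOn (fun t => 1 / circleManhattan r t) (Set.Icc 0 r) := by
  rintro s ⟨hs₀, hsr⟩ t ⟨-, htr⟩ hst
  exact one_div_le_one_div_of_le (hr.trans_le (le_circleManhattan hr.le hs₀ (by linarith)))
    (Real.sqrt_le_sqrt (by nlinarith))

theorem monotoneOn_one_div_circleManhattan {r : ℝ} (hr : 0 < r) :
    MonotoneOn (fun t => 1 / circleManhattan r t) (Set.Icc r (2 * r)) := by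
  rintro s ⟨hrs, -⟩ t ⟨hrt, ht⟩ hst
  exact one_div_le_one_div_of_le (hr.trans_le (le_circleManhattan hr.le (by linarith) ht))
    (Real.sqrt_le_sqrt (by nlinarith))

theorem integral_one_div_circleManhattan {r : ℝ} (hr : 0 < r) :
    ∫ t in (0 : ℝ)..2 * r, 1 / circleManhattan r t = π / 2 := by
  have hc : (2 : ℝ) * r ^ 2 = (√2 * r) ^ 2 := by rw [mul_pow, Real.sq_sqrt zero_le_two]
  have hrc : r < √2 * r := lt_mul_left hr Real.one_lt_sqrt_two
  have hquarter : Real.arcsin (r / (√2 * r)) = π / 4 := by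
    have : r / (√2 * r) = √2 / 2 := by
      field_simp
      rw [Real.sq_sqrt zero_le_two]
    rw [this, ← Real.sin_pi_div_four, Real.arcsin_sin (by linarith [Real.pi_pos])
      (by linarith [Real.pi_pos])]
  simp only [circleManhattan, hc]
  rw [intervalIntegral.integral_comp_sub_right (fun u => 1 / √((√2 * r) ^ 2 - u ^ 2)),
    integral_one_div_sqrt_sq_sub_sq
      (by rwa [zero_sub, abs_neg, abs_of_pos hr])
      (by rwa [two_mul, add_sub_cancel_right, abs_of_pos hr]),
    zero_sub, two_mul, add_sub_cancel_right, neg_div, Real.arcsin_neg, hquarter]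
  ring

theorem abs_sum_one_div_circleManhattan_sub_pi_div_two_le {r : ℕ} (hr : 0 < r) :
    |∑ n ∈ Finset.range (2 * r), 1 / circleManhattan r n - π / 2| ≤ 1 / r := by
  set g : ℝ → ℝ := fun t => 1 / circleManhattan r t
  have hr' : (0 : ℝ) < r := Nat.cast_pos.2 hr
  have hanti : AntitoneOn g (Set.Icc ((0 : ℕ) : ℝ) r) := by
    rw [Nat.cast_zero]; exact antitoneOn_one_div_circleManhattan hr'
  have hmono : MonotoneOn g (Set.Icc (r : ℝ) ((2 * r : ℕ) : ℝ)) := by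
    rw [Nat.cast_mul, Nat.cast_ofNat]; exact monotoneOn_one_div_circleManhattan hr'
  have hsplit : ∑ n ∈ Finset.range (2 * r), g n =
      ∑ n ∈ Finset.Ico 0 r, g n + ∑ n ∈ Finset.Ico r (2 * r), g n := by
    rw [Finset.sum_Ico_consecutive _ (Nat.zero_le r) (by omega), Finset.range_eq_Ico]
  have hint : ∫ t in (0 : ℝ)..2 * r, g t =
      (∫ t in (0 : ℝ)..r, g t) + ∫ t in (r : ℝ)..2 * r, g t := by
    refine (intervalIntegral.integral_add_adjacent_intervals ?_ ?_).symm
    · exact AntitoneOn.intervalIntegrable (by simpa [Set.uIcc_of_le hr'.le] using hanti)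
    · refine MonotoneOn.intervalIntegrable ?_
      simpa [Set.uIcc_of_le (by linarith : (r : ℝ) ≤ 2 * r)] using hmono
  have hleft := hanti.integral_le_sum_Ico (Nat.zero_le r)
  have hleft' := hanti.sum_Ico_le_integral_add (Nat.zero_le r)
  have hright := hmono.sum_le_integral_Ico (by omega : r ≤ 2 * r)
  have hright' := hmono.integral_le_sum_Ico_add (by omega : r ≤ 2 * r)
  have hg0 : g 0 ≤ 1 / r := one_div_circleManhattan_le hr' le_rfl (by linarith)
  have hg2r : g (2 * r) ≤ 1 / r := one_div_circleManhattan_le hr' (by linarith) le_rfl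
  have hgr : 0 ≤ g r := one_div_nonneg.2 (Real.sqrt_nonneg _)
  push_cast at hleft hleft' hright hright'
  rw [integral_one_div_circleManhattan hr'] at hint
  rw [abs_le]
  constructor <;> linarith

theorem abs_one_div_add_sub_one_div_circleManhattan_le {r t x y : ℝ} (hr : 5 ≤ r)
    (hx : 0 ≤ x) (hy : 0 ≤ y) (hyx : y - x = t - r) (ht₀ : 0 ≤ t) (ht : t ≤ 2 * r)
    (hlo : (r - 1) ^ 2 ≤ x ^ 2 + y ^ 2) (hhi : x ^ 2 + y ^ 2 ≤ (r + 1) ^ 2) :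
    |1 / (x + y) - 1 / circleManhattan r t| ≤ 12 / r ^ 2 := by
  have hsq : (x + y) ^ 2 = 2 * (x ^ 2 + y ^ 2) - (t - r) ^ 2 := by rw [← hyx]; ring
  have htr : (t - r) ^ 2 ≤ r ^ 2 := by nlinarith
  refine (abs_one_div_sub_one_div_sqrt_le (a := x + y) (r := r) (c := 6)
    (by linarith) ?_ (by linarith) ?_).trans_eq (by ring)
  · nlinarith
  · rw [hsq, abs_le]
    constructor <;> nlinarith

noncomputable def radialDev (r : ℕ) (p : ℤ × ℤ) : ℝ :=
  |(r : ℝ) - √((p.1 : ℝ) ^ 2 + (p.2 : ℝ) ^ 2)|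

def InAnnulus (r : ℕ) (p : ℤ × ℤ) : Prop :=
  ((r : ℤ) - 1) ^ 2 ≤ p.1 ^ 2 + p.2 ^ 2 ∧ p.1 ^ 2 + p.2 ^ 2 ≤ ((r : ℤ) + 1) ^ 2

theorem radialDev_le_one_iff {r : ℕ} (hr : 1 ≤ r) (p : ℤ × ℤ) :
    radialDev r p ≤ 1 ↔ InAnnulus r p := by
  rw [radialDev, abs_sub_sqrt_le_one_iff (by exact_mod_cast hr) (by positivity), InAnnulus]
  norm_cast

theorem inAnnulus_left_or_up {r : ℕ} {x y : ℤ} (hx : 1 ≤ x) (hxr : x ≤ r) (hy : 0 ≤ y)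
    (h : InAnnulus r (x, y)) : InAnnulus r (x - 1, y) ∨ InAnnulus r (x, y + 1) := by
  obtain ⟨hlo, hhi⟩ := h
  dsimp only at hlo hhi
  rcases le_or_gt (x ^ 2 + y ^ 2) ((r : ℤ) ^ 2) with hin | hout
  · right
    constructor <;> dsimp only <;> nlinarith
  · left
    constructor <;> dsimp only <;> nlinarith

section SignumPath

variable (r : ℕ)

theorem sigDelta_nonpos_iff (x y : ℤ) :
    sigDelta r x y ≤ 0 ↔ radialDev r (x - 1, y) ≤ radialDev r (x, y + 1) := by
  simp [sigDelta, radialDev]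

theorem sigPt_succ (n : ℕ) :
    sigPt r (n + 1) =
      if radialDev r ((sigPt r n).1 - 1, (sigPt r n).2) ≤
          radialDev r ((sigPt r n).1, (sigPt r n).2 + 1)
      then ((sigPt r n).1 - 1, (sigPt r n).2) else ((sigPt r n).1, (sigPt r n).2 + 1) := by
  by_cases h : sigDelta r (sigPt r n).1 (sigPt r n).2 ≤ 0 <;>
    simp [sigPt, sigStep, ← sigDelta_nonpos_iff, h]

theorem radialDev_sigPt_succ (n : ℕ) :
    radialDev r (sigPt r (n + 1)) =
      min (radialDev r ((sigPt r n).1 - 1, (sigPt r n).2))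
        (radialDev r ((sigPt r n).1, (sigPt r n).2 + 1)) := by
  rw [sigPt_succ]
  split_ifs with h
  · exact (min_eq_left h).symm
  · exact (min_eq_right (le_of_not_ge h)).symm

theorem sigPt_succ_eq_or (n : ℕ) :
    sigPt r (n + 1) = ((sigPt r n).1 - 1, (sigPt r n).2) ∨
      sigPt r (n + 1) = ((sigPt r n).1, (sigPt r n).2 + 1) := by
  rw [sigPt_succ]
  split_ifs <;> simp

theorem sigPt_snd_sub_fst (n : ℕ) : (sigPt r n).2 - (sigPt r n).1 = n - r := by
  induction n with
  | zero => simp [sigPt]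
  | succ n ih => rcases sigPt_succ_eq_or r n with h | h <;> rw [h] <;> push_cast <;> omega

theorem sigPt_snd_nonneg (n : ℕ) : 0 ≤ (sigPt r n).2 := by
  induction n with
  | zero => simp [sigPt]
  | succ n ih => rcases sigPt_succ_eq_or r n with h | h <;> rw [h] <;> dsimp only <;> omega

theorem sigPt_fst_le (n : ℕ) : (sigPt r n).1 ≤ r := by
  induction n with
  | zero => simp [sigPt]
  | succ n ih => rcases sigPt_succ_eq_or r n with h | h <;> rw [h] <;> dsimp only <;> omega

theorem sigPt_fst_nonneg_and_inAnnulus {n : ℕ} (hn : n < 2 * r) :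
    0 ≤ (sigPt r n).1 ∧ InAnnulus r (sigPt r n) := by
  induction n with
  | zero => exact ⟨by simp [sigPt], by simp only [sigPt, InAnnulus]; constructor <;> nlinarith⟩
  | succ n ih =>
    obtain ⟨hx, hann⟩ := ih (by omega)
    have hr : 1 ≤ r := by omega
    have hyx := sigPt_snd_sub_fst r n
    have hy := sigPt_snd_nonneg r n
    -- `x_n = 0` with `n + 1 < 2r` would give `y_n = n - r ≤ r - 2`, inside the annulus' hole
    have hx₁ : 1 ≤ (sigPt r n).1 := by
      by_contra! hx₀
      have : (sigPt r n).2 ≤ r - 2 := by omega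
      have := hann.1
      nlinarith
    refine ⟨by rcases sigPt_succ_eq_or r n with h | h <;> rw [h] <;> dsimp only <;> omega, ?_⟩
    rw [← radialDev_le_one_iff hr, radialDev_sigPt_succ]
    rcases inAnnulus_left_or_up hx₁ (sigPt_fst_le r n) hy hann with h | h
    · exact (min_le_left _ _).trans ((radialDev_le_one_iff hr _).2 h)
    · exact (min_le_right _ _).trans ((radialDev_le_one_iff hr _).2 h)

end SignumPath

theorem abs_one_div_sigPt_sub_one_div_circleManhattan_le {r n : ℕ} (hr : 5 ≤ r)
    (hn : n < 2 * r) :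
    |1 / (((sigPt r n).1 + (sigPt r n).2 : ℤ) : ℝ) - 1 / circleManhattan r n| ≤
      12 / (r : ℝ) ^ 2 := by
  obtain ⟨hx, hlo, hhi⟩ := sigPt_fst_nonneg_and_inAnnulus r hn
  have hyx : ((sigPt r n).2 : ℝ) - (sigPt r n).1 = n - r := by
    exact_mod_cast sigPt_snd_sub_fst r n
  push_cast
  exact abs_one_div_add_sub_one_div_circleManhattan_le (by exact_mod_cast hr)
    (by exact_mod_cast hx) (by exact_mod_cast sigPt_snd_nonneg r n) hyx n.cast_nonneg
    (by exact_mod_cast hn.le)    (by exact_mod_cast hlo) (by exact_mod_cast hhi)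

theorem abs_two_mul_sum_one_div_sigPt_sub_pi_le {r : ℕ} (hr : 5 ≤ r) :
    |2 * ∑ n ∈ Finset.range (2 * r), 1 / (((sigPt r n).1 + (sigPt r n).2 : ℤ) : ℝ) - π| ≤
      50 / r := by
  have hr₀ : (0 : ℝ) < r := by positivity
  have hpath : |∑ n ∈ Finset.range (2 * r), 1 / (((sigPt r n).1 + (sigPt r n).2 : ℤ) : ℝ) -
      ∑ n ∈ Finset.range (2 * r), 1 / circleManhattan r n| ≤ 24 / r := by
    rw [← Finset.sum_sub_distrib]
    refine (Finset.abs_sum_le_sum_abs _ _).trans ?_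
    refine (Finset.sum_le_card_nsmul _ _ _ fun n hn =>
      abs_one_div_sigPt_sub_one_div_circleManhattan_le hr (Finset.mem_range.1 hn)).trans_eq ?_
    rw [Finset.card_range, nsmul_eq_mul]
    field_simp
    push_cast
    ring
  have hriemann := abs_sum_one_div_circleManhattan_sub_pi_div_two_le (r := r) (by omega)
  have h50 : (50 : ℝ) / r = 2 * (24 / r) + 2 * (1 / r) := by ring
  rw [abs_le] at hpath hriemann ⊢
  constructor <;> linarith [hpath.1, hpath.2, hriemann.1, hriemann.2]

/-- Conjecture 1 of the paper: the arithmetic mean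
`A(π_n) = (1/(2r)) Σ_{n=0}^{2r-1} 4r/a_n = 2 Σ_{n=0}^{2r-1} 1/a_n` of the π-values
`π_n(r) = 4r/a_n`, where `a_n = x_n + y_n` is the Manhattan distance of the `n`-th point
of the digital quarter circle of radius `r` to the origin, converges to `π` as the
positive integer `r` tends to infinity. -/
theorem sig_arithmetic_mean_tendsto_pi :
    Tendsto
      (fun r : ℕ => 2 * ∑ n ∈ Finset.range (2 * r),
        1 / (((sigPt r n).1 + (sigPt r n).2 : ℤ) : ℝ))
      atTop (nhds Real.pi) := by
  rw [tendsto_iff_dist_tendsto_zero]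
  refine squeeze_zero' (.of_forall fun _ => dist_nonneg) ?_
    (tendsto_const_div_atTop_nhds_zero_nat 50)
  filter_upwards [eventually_ge_atTop 5] with r hr
  exact abs_two_mul_sum_one_div_sigPt_sub_pi_le hr
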